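/- Let J₁, J₂, J₃ be Hermitian d×d complex matrices with J₁² + J₂² + J₃² = λ·I for some real λ, and let ψ ∈ ℂ^d be a unit vector. Suppose: (i) there is a unitary C with Cψ = ψ and C†J₁C = J₂, C†J₂C = J₃, C†J₃C = J₁; and (ii) for every ordered pair (i, j) with i ≠ j there is a unitary V (depending on i, j) with Vψ = ψ, V†J_iV = −J_i, and V†J_jV = J_j. Then ψ satisfies the quantum metrology conditions: ⟨J_i⟩_ψ = 0 for all i, ⟨J_iJ_l⟩_ψ = 0 for all i ≠ l, and ⟨J_i²⟩_ψ = λ/3 for all i. -/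
import Mathlib


open Matrix

/-- The expectation value `⟨A⟩_ψ = ⟨ψ, A ψ⟩` of a matrix `A` in the state `ψ`. -/
noncomputable def expVal {d : ℕ} (ψ : Fin d → ℂ) (A : Matrix (Fin d) (Fin d) ℂ) : ℂ :=
  star ψ ⬝ᵥ (A *ᵥ ψ)

lemma expVal_conj {d : ℕ} (ψ : Fin d → ℂ) (V M : Matrix (Fin d) (Fin d) ℂ)
    (hVψ : V *ᵥ ψ = ψ) : expVal ψ (Vᴴ * M * V) = expVal ψ M := by
  unfold expVal
  have h1 : (Vᴴ * M * V) *ᵥ ψ = Vᴴ *ᵥ (M *ᵥ ψ) := by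
    rw [← Matrix.mulVec_mulVec, ← Matrix.mulVec_mulVec, hVψ]
  have h2 : star ψ ᵥ* Vᴴ = star ψ := by
    rw [← Matrix.star_mulVec, hVψ]
  rw [h1, Matrix.dotProduct_mulVec, h2]

lemma expVal_neg {d : ℕ} (ψ : Fin d → ℂ) (A : Matrix (Fin d) (Fin d) ℂ) :
    expVal ψ (-A) = -expVal ψ A := by
  simp [expVal, Matrix.neg_mulVec]

lemma expVal_add {d : ℕ} (ψ : Fin d → ℂ) (A B : Matrix (Fin d) (Fin d) ℂ) :
    expVal ψ (A + B) = expVal ψ A + expVal ψ B := by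
  simp [expVal, Matrix.add_mulVec]

/-- If the Hermitian generators `J₁, J₂, J₃` satisfy the Casimir identity
`J₁² + J₂² + J₃² = λ • I` and the unit vector `ψ` is fixed by (i) a unitary cyclically
permuting the generators and (ii) for each ordered pair `i ≠ j` a unitary negating `J_i`
while fixing `J_j`, then `ψ` satisfies the quantum metrology conditions:
`⟨J_i⟩ = 0`, `⟨J_i J_l⟩ = 0` for `i ≠ l`, and `⟨J_i²⟩ = λ/3`. -/
theorem metrology_conditions_of_symmetry {d : ℕ} (lam : ℝ)
    (J : Fin 3 → Matrix (Fin d) (Fin d) ℂ) (hJ : ∀ i, (J i).IsHermitian)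
    (hCas : J 0 ^ 2 + J 1 ^ 2 + J 2 ^ 2 = (lam : ℂ) • (1 : Matrix (Fin d) (Fin d) ℂ))
    (ψ : Fin d → ℂ) (hψ : star ψ ⬝ᵥ ψ = 1)
    (C : Matrix (Fin d) (Fin d) ℂ) (hC : C ∈ Matrix.unitaryGroup (Fin d) ℂ)
    (hCψ : C *ᵥ ψ = ψ)
    (hC1 : Cᴴ * J 0 * C = J 1) (hC2 : Cᴴ * J 1 * C = J 2) (hC3 : Cᴴ * J 2 * C = J 0)
    (hneg : ∀ i j : Fin 3, i ≠ j → ∃ V : Matrix (Fin d) (Fin d) ℂ,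
      V ∈ Matrix.unitaryGroup (Fin d) ℂ ∧ V *ᵥ ψ = ψ ∧
      Vᴴ * J i * V = -(J i) ∧ Vᴴ * J j * V = J j) :
    (∀ i, expVal ψ (J i) = 0) ∧
    (∀ i l, i ≠ l → expVal ψ (J i * J l) = 0) ∧
    (∀ i, expVal ψ (J i * J i) = (lam : ℂ) / 3) := by
  -- generic conjugation splitting for unitaries
  have key : ∀ (V : Matrix (Fin d) (Fin d) ℂ), V ∈ Matrix.unitaryGroup (Fin d) ℂ →
      ∀ A B, Vᴴ * (A * B) * V = (Vᴴ * A * V) * (Vᴴ * B * V) := by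
    intro V hV A B
    have h2 : V * Vᴴ = 1 := by
      have := hV.2
      rwa [Matrix.star_eq_conjTranspose] at this
    calc Vᴴ * (A * B) * V = Vᴴ * A * (V * Vᴴ) * B * V := by
          rw [h2]; noncomm_ring
      _ = (Vᴴ * A * V) * (Vᴴ * B * V) := by noncomm_ring
  have first : ∀ i, expVal ψ (J i) = 0 := by
    intro i
    have hij : ∃ j : Fin 3, i ≠ j := by fin_cases i <;> [exact ⟨1, by decide⟩;
      exact ⟨0, by decide⟩; exact ⟨0, by decide⟩]
    obtain ⟨j, hj⟩ := hij
    obtain ⟨V, hV, hVψ, hVi, _⟩ := hneg i j hj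
    have := expVal_conj ψ V (J i) hVψ
    rw [hVi, expVal_neg] at this
    linear_combination -this / 2
  have second : ∀ i l, i ≠ l → expVal ψ (J i * J l) = 0 := by
    intro i l hil
    obtain ⟨V, hV, hVψ, hVi, hVl⟩ := hneg i l hil
    have := expVal_conj ψ V (J i * J l) hVψ
    rw [key V hV, hVi, hVl, Matrix.neg_mul, expVal_neg] at this
    linear_combination -this / 2
  refine ⟨first, second, ?_⟩
  -- equality of diagonal second moments via the cyclic unitary
  have e01 : expVal ψ (J 0 * J 0) = expVal ψ (J 1 * J 1) := by
    have := expVal_conj ψ C (J 0 * J 0) hCψ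
    rw [key C hC, hC1] at this
    exact this.symm
  have e12 : expVal ψ (J 1 * J 1) = expVal ψ (J 2 * J 2) := by
    have := expVal_conj ψ C (J 1 * J 1) hCψ
    rw [key C hC, hC2] at this
    exact this.symm
  have esum : expVal ψ (J 0 * J 0) + expVal ψ (J 1 * J 1) + expVal ψ (J 2 * J 2)
      = (lam : ℂ) := by
    rw [← expVal_add, ← expVal_add]
    have : J 0 * J 0 + J 1 * J 1 + J 2 * J 2 = (lam : ℂ) • (1 : Matrix (Fin d) (Fin d) ℂ) := by
      rw [← pow_two, ← pow_two, ← pow_two]; exact hCas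
    rw [this]
    simp [expVal, Matrix.smul_mulVec, Matrix.one_mulVec, hψ]
  have e0 : expVal ψ (J 0 * J 0) = (lam : ℂ) / 3 := by
    rw [e01, e12] at esum; rw [e01, e12]; linear_combination esum / 3
  have e1 : expVal ψ (J 1 * J 1) = (lam : ℂ) / 3 := e01 ▸ e0
  have e2 : expVal ψ (J 2 * J 2) = (lam : ℂ) / 3 := e12 ▸ e1
  intro i
  fin_cases i
  · exact e0
  · exact e1
  · exact e2
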